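/- arXiv:1701.06480 — 4 statements merged into one kernel-verified Lean document; each statement's English description precedes it below -/
import Mathlib

section
/- For every ξ ∈ ℂ with |ξ| > R and every 1 ≤ q ≤ ∞, the averaged quantity ( ⨍_{|y| ≤ 1/R} |e^{2i ξ̄·y} − 1|^q dm(y) )^{1/q} is bounded above and below by absolute positive constants independent of ξ, R and q. -/
/-!
Write `e y = exp (2 i Re (ξ y))`. Translating by `h = π / (2ξ)` flips the sign of `e`,
so `|e y - 1| + |e (y + h) - 1| ≥ 2`. Integrating this over the points `y` of the disk `B`
with `y + h ∈ B` shows that `∫_B |e - 1|` is at least the measure of that set, which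
contains a disk of radius `(1 - π/4) / R` because `|h| < π / (2R)`. Hence the `L¹` average
is at least `(1 - π/4)²`; the `L^q` averages dominate it on a probability space, and
`|e - 1| ≤ 2` gives the upper bound.
-/

open MeasureTheory ENNReal Metric

noncomputable section

def avgBall (r : ℝ) : Measure ℂ :=
  (volume (ball (0 : ℂ) r))⁻¹ • volume.restrict (ball (0 : ℂ) r)

open scoped Real

theorem mul_measure_inter_preimage_add_le_two_mul_setLIntegral {G : Type*} [MeasurableSpace G]
    [AddGroup G] [MeasurableAdd G] {μ : Measure G} [μ.IsAddRightInvariant] {f : G → ℝ≥0∞}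
    (hf : Measurable f) (s : Set G) {c : ℝ≥0∞} {h : G} (hfh : ∀ y, c ≤ f y + f (y + h)) :
    c * μ (s ∩ (· + h) ⁻¹' s) ≤ 2 * ∫⁻ y in s, f y ∂μ := by
  set D := s ∩ (· + h) ⁻¹' s
  have hshift : ∫⁻ y in D, f (y + h) ∂μ ≤ ∫⁻ y in s, f y ∂μ := calc
    ∫⁻ y in D, f (y + h) ∂μ ≤ ∫⁻ y in (· + h) ⁻¹' s, f (y + h) ∂μ :=
      lintegral_mono_set Set.inter_subset_right
    _ = ∫⁻ y in s, f y ∂μ :=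
      (measurePreserving_add_right μ h).setLIntegral_comp_preimage_emb
        (MeasurableEquiv.addRight h).measurableEmbedding f s
  calc c * μ D = ∫⁻ _ in D, c ∂μ := (setLIntegral_const D c).symm
    _ ≤ ∫⁻ y in D, f y + f (y + h) ∂μ := lintegral_mono hfh
    _ = ∫⁻ y in D, f y ∂μ + ∫⁻ y in D, f (y + h) ∂μ := lintegral_add_left hf _
    _ ≤ ∫⁻ y in s, f y ∂μ + ∫⁻ y in s, f y ∂μ :=
      add_le_add (lintegral_mono_set Set.inter_subset_left) hshift
    _ = 2 * ∫⁻ y in s, f y ∂μ := (two_mul _).symm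

theorem ball_neg_half_smul_subset_ball_inter_preimage_add {E : Type*} [SeminormedAddCommGroup E]
    [NormedSpace ℝ E] (h : E) {r ρ : ℝ} (hr : r + ‖h‖ / 2 ≤ ρ) :
    ball (-((2 : ℝ)⁻¹ • h)) r ⊆ ball 0 ρ ∩ (· + h) ⁻¹' ball 0 ρ := by
  set k := (2 : ℝ)⁻¹ • h
  have hk : ‖k‖ = ‖h‖ / 2 := by rw [norm_smul]; norm_num; ring
  intro y hy
  rw [mem_ball, dist_eq_norm, sub_neg_eq_add] at hy
  refine ⟨mem_ball_zero_iff.2 ?_, mem_ball_zero_iff.2 ?_⟩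
  · calc ‖y‖ = ‖(y + k) - k‖ := by rw [add_sub_cancel_right]
      _ ≤ ‖y + k‖ + ‖k‖ := norm_sub_le _ _
      _ < ρ := by linarith
  · calc ‖y + h‖ = ‖(y + k) + k‖ := by rw [add_assoc, ← add_smul]; norm_num
      _ ≤ ‖y + k‖ + ‖k‖ := norm_add_le _ _
      _ < ρ := by linarith

theorem measure_ball_le_measure_ball_inter_preimage_add {E : Type*} [NormedAddCommGroup E]
    [NormedSpace ℝ E] [MeasurableSpace E] [BorelSpace E] (μ : Measure E) [μ.IsAddHaarMeasure]
    (h : E) {r ρ : ℝ} (hr : r + ‖h‖ / 2 ≤ ρ) :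
    μ (ball 0 r) ≤ μ (ball 0 ρ ∩ (· + h) ⁻¹' ball 0 ρ) := by
  rw [← Measure.addHaar_ball_center μ (-((2 : ℝ)⁻¹ • h))]
  exact measure_mono (ball_neg_half_smul_subset_ball_inter_preimage_add h hr)

theorem two_le_enorm_exp_two_mul_I_sub_one_add (t : ℝ) :
    2 ≤ ‖Complex.exp (2 * Complex.I * t) - 1‖ₑ +
      ‖Complex.exp (2 * Complex.I * ((t + π / 2 : ℝ) : ℂ)) - 1‖ₑ := by
  have hflip : Complex.exp (2 * Complex.I * ((t + π / 2 : ℝ) : ℂ)) =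
      -Complex.exp (2 * Complex.I * t) := by
    rw [show 2 * Complex.I * ((t + π / 2 : ℝ) : ℂ) = 2 * Complex.I * t + π * Complex.I by
        push_cast; ring,
      Complex.exp_add, Complex.exp_pi_mul_I, mul_neg_one]
  calc (2 : ℝ≥0∞) = ‖(Complex.exp (2 * Complex.I * t) - 1) -
        (Complex.exp (2 * Complex.I * ((t + π / 2 : ℝ) : ℂ)) - 1)‖ₑ := by
        rw [hflip, sub_sub_sub_cancel_right, sub_neg_eq_add, ← two_mul, enorm_mul,
          show 2 * Complex.I * (t : ℂ) = (2 * t : ℝ) * Complex.I by push_cast; ring,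
          Complex.enorm_exp_ofReal_mul_I]
        simp [enorm_eq_nnnorm]
    _ ≤ _ := enorm_sub_le

theorem enorm_exp_two_mul_I_sub_one_le (t : ℝ) :
    ‖Complex.exp (2 * Complex.I * t) - 1‖ₑ ≤ 2 := by
  calc _ ≤ ‖Complex.exp (2 * Complex.I * t)‖ₑ + ‖(1 : ℂ)‖ₑ := enorm_sub_le
    _ = 2 := by
      rw [show 2 * Complex.I * (t : ℂ) = (2 * t : ℝ) * Complex.I by push_cast; ring,
        Complex.enorm_exp_ofReal_mul_I, enorm_one, one_add_one_eq_two]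

theorem isProbabilityMeasure_avgBall {r : ℝ} (hr : 0 < r) : IsProbabilityMeasure (avgBall r) :=
  ProbabilityTheory.cond_isProbabilityMeasure_of_finite (measure_ball_pos volume 0 hr).ne'
    measure_ball_lt_top.ne

theorem lintegral_avgBall (r : ℝ) (g : ℂ → ℝ≥0∞) :
    ∫⁻ y, g y ∂avgBall r = (∫⁻ y in ball 0 r, g y) / volume (ball (0 : ℂ) r) := by
  rw [avgBall, lintegral_smul_measure, smul_eq_mul, ENNReal.div_eq_inv_mul]

theorem ofReal_sq_le_lintegral_avgBall_enorm_exp_sub_one {ξ : ℂ} (hξ0 : ξ ≠ 0) {t ρ : ℝ}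
    (ht : 0 ≤ t) (hρ : 0 < ρ) (hξ : π / (4 * ‖ξ‖) ≤ (1 - t) * ρ) :
    ENNReal.ofReal (t ^ 2) ≤
      ∫⁻ y, ‖Complex.exp (2 * Complex.I * ((ξ * y).re : ℂ)) - 1‖ₑ ∂avgBall ρ := by
  set h : ℂ := (π / 2 : ℝ) / ξ
  have hshift (y : ℂ) : (ξ * (y + h)).re = (ξ * y).re + π / 2 := by
    rw [mul_add, mul_div_cancel₀ _ hξ0, Complex.add_re, Complex.ofReal_re]
  have hh : ‖h‖ / 2 = π / (4 * ‖ξ‖) := by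
    rw [norm_div, Complex.norm_real, Real.norm_of_nonneg (by positivity)]
    field_simp; ring
  have hpair := mul_measure_inter_preimage_add_le_two_mul_setLIntegral (μ := volume) (h := h)
    (f := fun y : ℂ => ‖Complex.exp (2 * Complex.I * ((ξ * y).re : ℂ)) - 1‖ₑ)
    (by fun_prop) (ball 0 ρ) fun y => by
      simpa only [hshift] using two_le_enorm_exp_two_mul_I_sub_one_add (ξ * y).re
  rw [lintegral_avgBall, ENNReal.le_div_iff_mul_le (.inl (measure_ball_pos volume 0 hρ).ne')
    (.inl measure_ball_lt_top.ne)]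
  calc ENNReal.ofReal (t ^ 2) * volume (ball (0 : ℂ) ρ) = volume (ball (0 : ℂ) (t * ρ)) := by
        rw [Measure.addHaar_ball_mul volume 0 ht, Complex.finrank_real_complex]
    _ ≤ volume (ball 0 ρ ∩ (· + h) ⁻¹' ball 0 ρ) :=
        measure_ball_le_measure_ball_inter_preimage_add volume h (by linarith)
    _ ≤ _ := (ENNReal.mul_le_mul_iff_right two_ne_zero ofNat_ne_top).1 hpair

/-- for every `ξ ∈ ℂ` with `|ξ| > R` and every `1 ≤ q ≤ ∞`, the
averaged quantity `(⨍_{|y| ≤ 1/R} |e^{2i ξ̄·y} − 1|^q dm(y))^{1/q}` is bounded above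
and below by absolute positive constants independent of `ξ`, `R` and `q`.
Here `ξ̄·y = Re(ξ y)` is the real scalar product of `ξ̄` and `y` as vectors in `ℝ²`,
and the `L^q` average is expressed as the `eLpNorm` with respect to the normalized
measure on the disk of radius `1/R`. -/
theorem stmt3 :
    ∃ c C : ℝ≥0∞, 0 < c ∧ C < ∞ ∧
      ∀ (R : ℝ), 0 < R → ∀ (ξ : ℂ), R < ‖ξ‖ → ∀ (q : ℝ≥0∞), 1 ≤ q →
        c ≤ eLpNorm
              (fun y : ℂ => Complex.exp (2 * Complex.I * ((ξ * y).re : ℂ)) - 1) q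
              (avgBall (1 / R)) ∧
        eLpNorm
              (fun y : ℂ => Complex.exp (2 * Complex.I * ((ξ * y).re : ℂ)) - 1) q
              (avgBall (1 / R)) ≤ C := by
  have hπ : 0 < 1 - π / 4 := by linarith [Real.pi_lt_four]
  refine ⟨ENNReal.ofReal ((1 - π / 4) ^ 2), 2, by positivity, ofNat_lt_top, ?_⟩
  intro R hR ξ hξ q hq
  have hξ0 : 0 < ‖ξ‖ := hR.trans hξ
  have := isProbabilityMeasure_avgBall (one_div_pos.2 hR)
  constructor
  · refine le_trans ?_ (eLpNorm_le_eLpNorm_of_exponent_le hq (by fun_prop))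
    rw [eLpNorm_one_eq_lintegral_enorm]
    refine ofReal_sq_le_lintegral_avgBall_enorm_exp_sub_one
      (norm_pos_iff.1 hξ0) hπ.le (one_div_pos.2 hR) ?_
    rw [_root_.sub_sub_cancel, mul_one_div, div_div]
    gcongr
  · calc _ ≤ 2 • avgBall (1 / R) Set.univ ^ q.toReal⁻¹ :=
          eLpNorm_le_of_ae_enorm_bound (ae_of_all _ fun y => enorm_exp_two_mul_I_sub_one_le _)
      _ = 2 := by rw [measure_univ, one_rpow, smul_eq_mul, mul_one]
end
end

section
/- Let g ∈ L^1_loc(ℂ) and 0 < p < ∞. Then the integral modulus of continuity satisfies the two-sided comparison ω_p(g)(t) ≈_p ( ∫_ℂ ⨍_{B(x,t)} |g(x) − g(y)|^p dm(y) dm(x) )^{1/p}, with implicit constants depending only on p. -/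
/-!
Substituting `y = x - h` and applying Tonelli, the double average becomes the average over
`h ∈ B(0, t)` of `‖g - g (· - h)‖ₚ ^ p`, hence is at most `ω_p(g)(t) ^ p`.

Conversely, for `‖h‖ ≤ t` the ball `B(x - h/2, t/2)` lies in both `B(x, t)` and `B(x - h, t)`.
Averaging `|g x - g (x - h)|^p ≤ 2^p (|g x - g y|^p + |g (x - h) - g y|^p)` over `y` in that ball
and integrating in `x` (translation invariance turns the second term into the first) bounds
`‖g - g (· - h)‖ₚ ^ p` by `2^p · 2 · 2^d` times the double average, where
`2^d = |B(0, t)| / |B(0, t/2)|`.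
-/

open MeasureTheory ENNReal Metric

noncomputable section

/-- Integral modulus of continuity of exponent `p` for functions on `ℂ`. -/
def modC (p : ℝ≥0∞) (f : ℂ → ℂ) (t : ℝ) : ℝ≥0∞ :=
  ⨆ y : {y : ℂ // ‖y‖ ≤ t}, eLpNorm (f - fun x => f (x - y.1)) p volume

/-- The double-average quantity
`( ∫_ℂ ⨍_{B(x,t)} |g(x) − g(y)|^p dm(y) dm(x) )^{1/p}` (in `ℝ≥0∞`). -/
def dblAvg (p : ℝ) (g : ℂ → ℂ) (t : ℝ) : ℝ≥0∞ :=
  (∫⁻ x : ℂ, (volume (ball x t))⁻¹ *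
      ∫⁻ y in ball x t, (‖g x - g y‖₊ : ℝ≥0∞) ^ p) ^ (1 / p)

open Module

lemma enorm_sub_rpow_le {F : Type*} [SeminormedAddCommGroup F] {p : ℝ} (hp : 0 ≤ p)
    (a b c : F) : ‖a - c‖ₑ ^ p ≤ 2 ^ p * (‖a - b‖ₑ ^ p + ‖c - b‖ₑ ^ p) := by
  have htri : ‖a - c‖ₑ ≤ ‖a - b‖ₑ + ‖c - b‖ₑ := by
    simpa only [edist_eq_enorm_sub] using edist_triangle_right a c b
  exact (rpow_le_rpow htri hp).trans (add_rpow_le_two_rpow_mul_rpow_add_rpow _ _ hp)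

namespace MeasureTheory

variable {E F : Type*} [NormedAddCommGroup E] [MeasurableSpace E] [BorelSpace E]
  {μ : Measure E} [SeminormedAddCommGroup F]

def shiftEnergy (μ : Measure E) (p : ℝ) (g : E → F) (h : E) : ℝ≥0∞ :=
  ∫⁻ x, ‖g x - g (x - h)‖ₑ ^ p ∂μ

def ballEnergy (μ : Measure E) (p : ℝ) (g : E → F) (t : ℝ) : ℝ≥0∞ :=
  ∫⁻ x, ∫⁻ y in ball x t, ‖g x - g y‖ₑ ^ p ∂μ ∂μ

section Invariant

variable [μ.IsAddLeftInvariant]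

lemma setLIntegral_ball_eq_sub [μ.IsNegInvariant] (f : E → ℝ≥0∞) (x : E) (t : ℝ) :
    ∫⁻ y in ball x t, f y ∂μ = ∫⁻ h in ball 0 t, f (x - h) ∂μ := by
  have hmem : ∀ h, x - h ∈ ball x t ↔ h ∈ ball (0 : E) t := fun h => by
    simp [mem_ball, dist_eq_norm]
  rw [← lintegral_indicator measurableSet_ball, ← lintegral_indicator measurableSet_ball,
    ← lintegral_sub_left_eq_self _ x]
  refine lintegral_congr fun h => ?_
  by_cases hh : h ∈ ball (0 : E) t
  · rw [Set.indicator_of_mem hh, Set.indicator_of_mem ((hmem h).2 hh)]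
  · rw [Set.indicator_of_notMem hh, Set.indicator_of_notMem (mt (hmem h).1 hh)]

variable [SecondCountableTopology E] [SFinite μ] {g : E → F}

lemma aemeasurable_enorm_sub_sub_rpow (hg : AEStronglyMeasurable g μ) (p : ℝ) :
    AEMeasurable (fun q : E × E => ‖g q.1 - g (q.1 - q.2)‖ₑ ^ p) (μ.prod μ) :=
  ((hg.comp_quasiMeasurePreserving Measure.quasiMeasurePreserving_fst).sub
    (hg.comp_quasiMeasurePreserving (quasiMeasurePreserving_sub μ μ))).enorm.pow_const p

variable [μ.IsNegInvariant]

lemma aemeasurable_setLIntegral_ball_enorm_sub_rpow (hg : AEStronglyMeasurable g μ) (p t : ℝ) :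
    AEMeasurable (fun x => ∫⁻ y in ball x t, ‖g x - g y‖ₑ ^ p ∂μ) μ := by
  simp only [setLIntegral_ball_eq_sub (μ := μ) (fun y => ‖g _ - g y‖ₑ ^ p) _ t]
  exact ((aemeasurable_enorm_sub_sub_rpow hg p).mono_measure
    (Measure.prod_mono le_rfl Measure.restrict_le_self)).lintegral_prod_right'

lemma ballEnergy_eq_setLIntegral_shiftEnergy (hg : AEStronglyMeasurable g μ) (p t : ℝ) :
    ballEnergy μ p g t = ∫⁻ h in ball 0 t, shiftEnergy μ p g h ∂μ := by
  simp only [ballEnergy, shiftEnergy,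
    setLIntegral_ball_eq_sub (μ := μ) (fun y => ‖g _ - g y‖ₑ ^ p) _ t]
  exact lintegral_lintegral_swap ((aemeasurable_enorm_sub_sub_rpow hg p).mono_measure
    (Measure.prod_mono le_rfl Measure.restrict_le_self))

lemma inv_measure_ball_mul_ballEnergy_le_iSup_shiftEnergy (hg : AEStronglyMeasurable g μ)
    (p t : ℝ) :
    (μ (ball 0 t))⁻¹ * ballEnergy μ p g t ≤ ⨆ h : {h : E // ‖h‖ ≤ t}, shiftEnergy μ p g h := by
  rw [← ENNReal.div_eq_inv_mul]
  refine div_le_of_le_mul' ?_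
  rw [ballEnergy_eq_setLIntegral_shiftEnergy hg, mul_comm, ← setLIntegral_const]
  refine setLIntegral_mono measurable_const fun h hh => ?_
  exact le_iSup (fun h : {h : E // ‖h‖ ≤ t} => shiftEnergy μ p g h)
    ⟨h, (mem_ball_zero_iff.1 hh).le⟩

end Invariant

section AddHaar

variable [NormedSpace ℝ E] [μ.IsAddHaarMeasure] {g : E → F}

lemma measure_ball_eq_two_pow_finrank_mul_measure_ball_half [FiniteDimensional ℝ E] (x : E)
    (t : ℝ) :
    μ (ball x t) = 2 ^ finrank ℝ E * μ (ball 0 (t / 2)) := by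
  have h := Measure.addHaar_ball_mul_of_pos μ x two_pos (t / 2)
  rwa [mul_div_cancel₀ t two_ne_zero, ENNReal.ofReal_pow zero_le_two, ENNReal.ofReal_ofNat] at h

lemma measure_ball_half_mul_enorm_sub_rpow_le (hg : AEStronglyMeasurable g μ) {p : ℝ}
    (hp : 0 ≤ p) {h : E} {t : ℝ} (hh : ‖h‖ ≤ t) (x : E) :
    μ (ball 0 (t / 2)) * ‖g x - g (x - h)‖ₑ ^ p ≤
      2 ^ p * (∫⁻ y in ball x t, ‖g x - g y‖ₑ ^ p ∂μ +
        ∫⁻ y in ball (x - h) t, ‖g (x - h) - g y‖ₑ ^ p ∂μ) := by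
  set c := x - (2⁻¹ : ℝ) • h
  have hc : ‖(2⁻¹ : ℝ) • h‖ ≤ t / 2 := by
    rw [norm_smul, Real.norm_of_nonneg (by norm_num)]
    linarith
  have hsub_x : ball c (t / 2) ⊆ ball x t := ball_subset_ball' <| by
    rw [dist_eq_norm, show c - x = -((2⁻¹ : ℝ) • h) by simp [c], norm_neg]
    linarith
  have hsub_xh : ball c (t / 2) ⊆ ball (x - h) t := ball_subset_ball' <| by
    rw [dist_eq_norm, show c - (x - h) = (2⁻¹ : ℝ) • h by simp only [c]; module]
    linarith
  have hmeas : AEMeasurable (fun y => ‖g x - g y‖ₑ ^ p) (μ.restrict (ball c (t / 2))) :=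
    (aestronglyMeasurable_const.sub hg).enorm.pow_const p |>.restrict
  calc μ (ball 0 (t / 2)) * ‖g x - g (x - h)‖ₑ ^ p
      = ∫⁻ _ in ball c (t / 2), ‖g x - g (x - h)‖ₑ ^ p ∂μ := by
        rw [setLIntegral_const, Measure.addHaar_ball_center μ c, mul_comm]
    _ ≤ ∫⁻ y in ball c (t / 2), 2 ^ p * (‖g x - g y‖ₑ ^ p + ‖g (x - h) - g y‖ₑ ^ p) ∂μ :=
        lintegral_mono fun y => enorm_sub_rpow_le hp _ _ _
    _ = 2 ^ p * (∫⁻ y in ball c (t / 2), ‖g x - g y‖ₑ ^ p ∂μ +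
          ∫⁻ y in ball c (t / 2), ‖g (x - h) - g y‖ₑ ^ p ∂μ) := by
        rw [lintegral_const_mul' _ _ (rpow_ne_top_of_nonneg hp ofNat_ne_top),
          lintegral_add_left' hmeas]
    _ ≤ _ := by gcongr

variable [FiniteDimensional ℝ E]

lemma measure_ball_half_mul_shiftEnergy_le (hg : AEStronglyMeasurable g μ) {p : ℝ}
    (hp : 0 ≤ p) {h : E} {t : ℝ} (hh : ‖h‖ ≤ t) :
    μ (ball 0 (t / 2)) * shiftEnergy μ p g h ≤ 2 ^ p * (2 * ballEnergy μ p g t) := by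
  set u := fun x => ∫⁻ y in ball x t, ‖g x - g y‖ₑ ^ p ∂μ
  calc μ (ball 0 (t / 2)) * shiftEnergy μ p g h
      ≤ ∫⁻ x, μ (ball 0 (t / 2)) * ‖g x - g (x - h)‖ₑ ^ p ∂μ := lintegral_const_mul_le _ _
    _ ≤ ∫⁻ x, 2 ^ p * (u x + u (x - h)) ∂μ :=
        lintegral_mono fun x => measure_ball_half_mul_enorm_sub_rpow_le hg hp hh x
    _ = 2 ^ p * (2 * ballEnergy μ p g t) := by
        rw [lintegral_const_mul' _ _ (rpow_ne_top_of_nonneg hp ofNat_ne_top),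
          lintegral_add_left' (aemeasurable_setLIntegral_ball_enorm_sub_rpow hg p t),
          lintegral_sub_right_eq_self u h, ← two_mul, ballEnergy]

lemma iSup_shiftEnergy_le (hg : AEStronglyMeasurable g μ) {p : ℝ} (hp : 0 ≤ p) {t : ℝ}
    (ht : 0 < t) :
    ⨆ h : {h : E // ‖h‖ ≤ t}, shiftEnergy μ p g h ≤
      2 ^ finrank ℝ E * 2 ^ p * 2 * ((μ (ball 0 t))⁻¹ * ballEnergy μ p g t) := by
  refine iSup_le fun ⟨h, hh⟩ => ?_
  have hκ₀ : μ (ball (0 : E) t) ≠ 0 := (measure_ball_pos μ 0 ht).ne'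
  have hκ : μ (ball (0 : E) t) ≠ ∞ := measure_ball_lt_top.ne
  calc shiftEnergy μ p g h
      = (μ (ball 0 t))⁻¹ * (μ (ball 0 t) * shiftEnergy μ p g h) :=
        (ENNReal.inv_mul_cancel_left hκ₀ hκ).symm
    _ ≤ (μ (ball 0 t))⁻¹ * (2 ^ finrank ℝ E * (2 ^ p * (2 * ballEnergy μ p g t))) := by
        rw [measure_ball_eq_two_pow_finrank_mul_measure_ball_half, mul_assoc]
        gcongr _ * (_ * ?_)
        exact measure_ball_half_mul_shiftEnergy_le hg hp hh
    _ = _ := by ring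

end AddHaar

end MeasureTheory

lemma modC_ofReal_eq {p : ℝ} (hp : 0 < p) (g : ℂ → ℂ) (t : ℝ) :
    modC (ENNReal.ofReal p) g t =
      (⨆ h : {h : ℂ // ‖h‖ ≤ t}, shiftEnergy volume p g h) ^ (1 / p) := by
  have hnorm : ∀ h : ℂ, eLpNorm (g - fun x => g (x - h)) (ENNReal.ofReal p) volume =
      shiftEnergy volume p g h ^ (1 / p) := fun h => by
    rw [eLpNorm_eq_lintegral_rpow_enorm_toReal (by simpa using hp) ofReal_ne_top,
      toReal_ofReal hp.le]
    rfl
  simp only [modC, hnorm]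
  exact ((orderIsoRpow (1 / p) (by positivity)).map_iSup _).symm

lemma dblAvg_eq (p : ℝ) (g : ℂ → ℂ) {t : ℝ} (ht : 0 < t) :
    dblAvg p g t = ((volume (ball (0 : ℂ) t))⁻¹ * ballEnergy volume p g t) ^ (1 / p) := by
  rw [dblAvg, ballEnergy, ← lintegral_const_mul' _ _ (inv_ne_top.2 (measure_ball_pos _ _ ht).ne')]
  simp only [Measure.addHaar_ball_center volume _ t, enorm_eq_nnnorm]

/-- for `g ∈ L¹_loc(ℂ)` and `0 < p < ∞`,
`ω_p(g)(t) ≈_p ( ∫_ℂ ⨍_{B(x,t)} |g(x) − g(y)|^p dm(y) dm(x) )^{1/p}` with constants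
depending only on `p` (the comparison holds in `ℝ≥0∞`, so both sides may be infinite
simultaneously). -/
theorem stmt4 (p : ℝ) (hp : 0 < p) :
    ∃ c C : ℝ≥0∞, 0 < c ∧ C < ∞ ∧
      ∀ (g : ℂ → ℂ), LocallyIntegrable g volume → ∀ t : ℝ, 0 < t →
        c * dblAvg p g t ≤ modC (ENNReal.ofReal p) g t ∧
        modC (ENNReal.ofReal p) g t ≤ C * dblAvg p g t := by
  refine ⟨1, (2 ^ finrank ℝ ℂ * 2 ^ p * 2) ^ (1 / p), one_pos,
    rpow_lt_top_of_nonneg (by positivity) (by finiteness), fun g hg t ht => ?_⟩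
  have hg_meas := hg.aestronglyMeasurable
  rw [modC_ofReal_eq hp, dblAvg_eq p g ht, one_mul, ← mul_rpow_of_nonneg _ _ (by positivity)]
  exact ⟨rpow_le_rpow (inv_measure_ball_mul_ballEnergy_le_iSup_shiftEnergy hg_meas p t)
      (by positivity), rpow_le_rpow (iSup_shiftEnergy_le hg_meas hp.le ht) (by positivity)⟩
end
end

section
/- Let α = (α₁, α₂, α₃, α₄) ∈ ℝ₊⁴ and let υ : ℝ₊ → ℝ₊ be increasing with lim_{t→0} υ(t) = 0. Define R(d) by 1/R(d) = υ^{-1}(d) for d ≤ 1 (with υ^{-1}(y) = sup{x : υ(x) ≤ y}) and 1/R(d) = υ^{-1}(1) otherwise. Then there exists a modulus of continuity ι = ι_α (increasing with ι(t) → 0 as t → 0) such that for all ρ ∈ (0, 1/2] and all d > ι(ρ) one has ρ^{α₁} < d^{α₂} / (α₃ e^{α₄ R(d)}). -/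
open Filter Set Topology

noncomputable section

/-! Since the level sets `{x > 0 | υ x ≤ y}` grow with `y`, `R` is antitone, so
`f d := d ^ α₂ / (α₃ e^{α₄ R d})` is monotone and tends to `∞`. The modulus is then the
generalized inverse `ι ρ := inf {d > 0 | ρ ^ α₁ < f d}`: it is monotone in `ρ`, every
`d > ι ρ` satisfies `ρ ^ α₁ < f d`, and `ι ρ → 0` because `ρ ^ α₁ → 0` while `f > 0`. -/

lemma sSup_le_sSup_of_forall_nonneg {s t : Set ℝ} (hst : s ⊆ t) (ht : BddAbove t)
    (ht₀ : ∀ x ∈ t, 0 ≤ x) : sSup s ≤ sSup t :=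
  Real.sSup_le (fun _ hx => le_csSup ht (hst hx)) (Real.sSup_nonneg ht₀)

lemma antitoneOn_of_inv_eq_sSup_levelSet {υ R : ℝ → ℝ}
    (hRpos : ∀ d, 0 < d → 0 < R d)
    (hbdd : ∀ y, 0 < y → BddAbove {x : ℝ | 0 < x ∧ υ x ≤ y})
    (hR1 : ∀ d, 0 < d → d ≤ 1 → (R d)⁻¹ = sSup {x : ℝ | 0 < x ∧ υ x ≤ d})
    (hR2 : ∀ d, 1 < d → (R d)⁻¹ = sSup {x : ℝ | 0 < x ∧ υ x ≤ 1}) :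
    AntitoneOn R (Ioi 0) := by
  have hR : ∀ d, 0 < d → (R d)⁻¹ = sSup {x : ℝ | 0 < x ∧ υ x ≤ min d 1} := by
    intro d hd
    rcases le_or_gt d 1 with h | h
    · rw [min_eq_left h, hR1 d hd h]
    · rw [min_eq_right h.le, hR2 d h]
  intro d hd d' hd' hdd'
  rw [← inv_le_inv₀ (hRpos d hd) (hRpos d' hd'), hR d hd, hR d' hd']
  refine sSup_le_sSup_of_forall_nonneg ?_ (hbdd _ (lt_min hd' one_pos)) fun _ hx => hx.1.le
  exact fun x hx => ⟨hx.1, hx.2.trans (min_le_min_right 1 hdd')⟩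

section RpowDivExp

variable {R : ℝ → ℝ} {a b c : ℝ}

lemma monotoneOn_rpow_div_mul_exp (hR : AntitoneOn R (Ioi 0)) (ha : 0 ≤ a) (hb : 0 ≤ b)
    (hc : 0 < c) : MonotoneOn (fun d => d ^ a / (c * Real.exp (b * R d))) (Ioi 0) := by
  intro d (hd : 0 < d) d' (hd' : 0 < d') hdd'
  have hRd : R d' ≤ R d := hR hd hd' hdd'
  dsimp only
  gcongr

lemma tendsto_rpow_div_mul_exp_atTop (hR : AntitoneOn R (Ioi 0)) (ha : 0 < a) (hb : 0 ≤ b)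
    (hc : 0 < c) : Tendsto (fun d => d ^ a / (c * Real.exp (b * R d))) atTop atTop := by
  have hK : 0 < c * Real.exp (b * R 1) := by positivity
  refine tendsto_atTop_mono' _ ?_ ((tendsto_rpow_atTop ha).atTop_div_const hK)
  filter_upwards [eventually_ge_atTop 1] with d hd
  have hd₀ : (0 : ℝ) < d := one_pos.trans_le hd
  have hRd : R d ≤ R 1 := hR (mem_Ioi.2 one_pos) hd₀ hd
  gcongr

end RpowDivExp

lemma exists_pos_lt_of_tendsto_atTop {f : ℝ → ℝ} (hf : Tendsto f atTop atTop) (y : ℝ) :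
    ∃ d, 0 < d ∧ y < f d :=
  ((eventually_gt_atTop 0).and (hf.eventually_gt_atTop y)).exists

def upperInverse (g f : ℝ → ℝ) (ρ : ℝ) : ℝ :=
  sInf {d | 0 < d ∧ g ρ < f d}

section UpperInverse

variable {g f : ℝ → ℝ}

lemma upperInverse_nonneg (ρ : ℝ) : 0 ≤ upperInverse g f ρ :=
  Real.sInf_nonneg fun _ hd => hd.1.le

lemma upperInverse_le {ρ d : ℝ} (hd : 0 < d) (h : g ρ < f d) : upperInverse g f ρ ≤ d :=
  csInf_le ⟨0, fun _ hx => hx.1.le⟩ ⟨hd, h⟩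

lemma monotoneOn_upperInverse (hg : MonotoneOn g (Ioi 0)) (hf : Tendsto f atTop atTop) :
    MonotoneOn (upperInverse g f) (Ioi 0) :=
  fun _ hρ ρ' hρ' hρρ' =>
    csInf_le_csInf ⟨0, fun _ hx => hx.1.le⟩ (exists_pos_lt_of_tendsto_atTop hf (g ρ'))
      fun _ hd => ⟨hd.1, (hg hρ hρ' hρρ').trans_lt hd.2⟩

lemma lt_of_upperInverse_lt (hfm : MonotoneOn f (Ioi 0)) (hf : Tendsto f atTop atTop)
    {ρ d : ℝ} (h : upperInverse g f ρ < d) : g ρ < f d := by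
  obtain ⟨d', ⟨hd', hlt⟩, hd'd⟩ :=
    exists_lt_of_csInf_lt (exists_pos_lt_of_tendsto_atTop hf (g ρ)) h
  exact hlt.trans_le (hfm hd' (hd'.trans hd'd) hd'd.le)

lemma tendsto_upperInverse_nhdsGT_zero (hg : Tendsto g (𝓝[>] 0) (𝓝 0))
    (hfpos : ∀ d, 0 < d → 0 < f d) : Tendsto (upperInverse g f) (𝓝[>] 0) (𝓝 0) := by
  refine tendsto_order.2 ⟨fun a ha => .of_forall fun ρ => ha.trans_le (upperInverse_nonneg ρ),
    fun ε hε => ?_⟩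
  filter_upwards [hg.eventually (gt_mem_nhds (hfpos _ (half_pos hε)))] with ρ hρ
  exact (upperInverse_le (half_pos hε) hρ).trans_lt (half_lt_self hε)

end UpperInverse

theorem stmt11_general (α₁ α₂ α₃ α₄ : ℝ) (h₁ : 0 < α₁) (h₂ : 0 < α₂) (h₃ : 0 < α₃)
    (h₄ : 0 < α₄) (υ R : ℝ → ℝ)
    (hRpos : ∀ d, 0 < d → 0 < R d)
    (hbdd : ∀ y, 0 < y → BddAbove {x : ℝ | 0 < x ∧ υ x ≤ y})
    (hR1 : ∀ d, 0 < d → d ≤ 1 → (R d)⁻¹ = sSup {x : ℝ | 0 < x ∧ υ x ≤ d})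
    (hR2 : ∀ d, 1 < d → (R d)⁻¹ = sSup {x : ℝ | 0 < x ∧ υ x ≤ 1}) :
    ∃ ι : ℝ → ℝ, MonotoneOn ι (Ioi 0) ∧ (∀ t, 0 < t → 0 ≤ ι t) ∧
      Tendsto ι (nhdsWithin 0 (Ioi 0)) (nhds 0) ∧
      ∀ ρ : ℝ, 0 < ρ → ρ ≤ 1 / 2 → ∀ d : ℝ, ι ρ < d →
        ρ ^ α₁ < d ^ α₂ / (α₃ * Real.exp (α₄ * R d)) := by
  set f : ℝ → ℝ := fun d => d ^ α₂ / (α₃ * Real.exp (α₄ * R d))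
  set g : ℝ → ℝ := fun ρ => ρ ^ α₁
  have hR : AntitoneOn R (Ioi 0) := antitoneOn_of_inv_eq_sSup_levelSet hRpos hbdd hR1 hR2
  have hfm : MonotoneOn f (Ioi 0) := monotoneOn_rpow_div_mul_exp hR h₂.le h₄.le h₃
  have hf : Tendsto f atTop atTop := tendsto_rpow_div_mul_exp_atTop hR h₂ h₄.le h₃
  have hfpos : ∀ d, 0 < d → 0 < f d := fun d hd => by positivity
  have hgm : MonotoneOn g (Ioi 0) := fun ρ hρ ρ' _ hρρ' =>
    Real.rpow_le_rpow (le_of_lt hρ) hρρ' h₁.le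
  have hg : Tendsto g (𝓝[>] 0) (𝓝 0) := by
    simpa [g, Real.zero_rpow h₁.ne'] using
      ((Real.continuous_rpow_const h₁.le).tendsto 0).mono_left nhdsWithin_le_nhds
  exact ⟨upperInverse g f, monotoneOn_upperInverse hgm hf, fun t _ => upperInverse_nonneg t,
    tendsto_upperInverse_nhdsGT_zero hg hfpos, fun ρ _ _ _ hd => lt_of_upperInverse_lt hfm hf hd⟩

/-- given `α ∈ ℝ₊⁴` and an increasing `υ : ℝ₊ → ℝ₊` with
`υ(t) → 0` as `t → 0⁺`, define `R(d)` by `1/R(d) = υ⁻¹(d)` for `d ≤ 1` and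
`1/R(d) = υ⁻¹(1)` otherwise, where `υ⁻¹(y) = sup{x > 0 : υ(x) ≤ y}`.  Then there is
a modulus of continuity `ι = ι_α` (increasing, `ι(t) → 0` as `t → 0⁺`) such that for
all `ρ ∈ (0, 1/2]` and all `d > ι(ρ)` one has
`ρ^{α₁} < d^{α₂} / (α₃ e^{α₄ R(d)})`. -/
theorem stmt11 (α₁ α₂ α₃ α₄ : ℝ) (h₁ : 0 < α₁) (h₂ : 0 < α₂) (h₃ : 0 < α₃)
    (h₄ : 0 < α₄) (υ R : ℝ → ℝ)
    (hmono : MonotoneOn υ (Ioi 0)) (hnonneg : ∀ t, 0 < t → 0 ≤ υ t)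
    (hlim : Tendsto υ (nhdsWithin 0 (Ioi 0)) (nhds 0))
    (hRpos : ∀ d, 0 < d → 0 < R d)
    (hbdd : ∀ y, 0 < y → BddAbove {x : ℝ | 0 < x ∧ υ x ≤ y})
    (hR1 : ∀ d, 0 < d → d ≤ 1 → (R d)⁻¹ = sSup {x : ℝ | 0 < x ∧ υ x ≤ d})
    (hR2 : ∀ d, 1 < d → (R d)⁻¹ = sSup {x : ℝ | 0 < x ∧ υ x ≤ 1}) :
    ∃ ι : ℝ → ℝ, MonotoneOn ι (Ioi 0) ∧ (∀ t, 0 < t → 0 ≤ ι t) ∧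
      Tendsto ι (nhdsWithin 0 (Ioi 0)) (nhds 0) ∧
      ∀ ρ : ℝ, 0 < ρ → ρ ≤ 1 / 2 → ∀ d : ℝ, ι ρ < d →
        ρ ^ α₁ < d ^ α₂ / (α₃ * Real.exp (α₄ * R d)) :=
  stmt11_general α₁ α₂ α₃ α₄ h₁ h₂ h₃ h₄ υ R hRpos hbdd hR1 hR2
end
end

section
/- With notation as in the preceding optimization lemma, if moreover υ is upper semi-continuous and ρ is small enough, then ι(ρ) ≤ υ( α₄ / (α₁ |log(ρ^{1/2})| − log α₃) ) + ρ^{α₁/(2α₂)}. -/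
open Filter Set

noncomputable section

/-- with the notation of the preceding optimization lemma
(`R` defined from the increasing modulus `υ` by `1/R(d) = υ⁻¹(min(d,1))`, and
`ι(t) = inf{x > 0 : R(x)/β₁ − β₂ log x + β₃ < |log t|}` with `β₁ = α₁/α₄`,
`β₂ = α₂/α₁`, `β₃ = (log α₃)/α₁`), if moreover `υ` is upper semi-continuous then,
for `ρ` small enough,
`ι(ρ) ≤ υ( α₄ / (α₁ |log ρ^{1/2}| − log α₃) ) + ρ^{α₁/(2α₂)}`. -/
theorem stmt12 (α₁ α₂ α₃ α₄ : ℝ) (h₁ : 0 < α₁) (h₂ : 0 < α₂) (h₃ : 0 < α₃)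
    (h₄ : 0 < α₄) (υ R : ℝ → ℝ)
    (hmono : MonotoneOn υ (Ioi 0)) (hnonneg : ∀ t, 0 < t → 0 ≤ υ t)
    (hlim : Tendsto υ (nhdsWithin 0 (Ioi 0)) (nhds 0))
    (husc : UpperSemicontinuousOn υ (Ioi 0))
    (hRpos : ∀ d, 0 < d → 0 < R d)
    (hbdd : ∀ y, 0 < y → BddAbove {x : ℝ | 0 < x ∧ υ x ≤ y})
    (hR1 : ∀ d, 0 < d → d ≤ 1 → (R d)⁻¹ = sSup {x : ℝ | 0 < x ∧ υ x ≤ d})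
    (hR2 : ∀ d, 1 < d → (R d)⁻¹ = sSup {x : ℝ | 0 < x ∧ υ x ≤ 1}) :
    ∃ ρ₀ : ℝ, 0 < ρ₀ ∧ ∀ ρ : ℝ, 0 < ρ → ρ ≤ ρ₀ →
      sInf {x : ℝ | 0 < x ∧
          R x / (α₁ / α₄) - (α₂ / α₁) * Real.log x + Real.log α₃ / α₁
            < |Real.log ρ|}
        ≤ υ (α₄ / (α₁ * |Real.log (ρ ^ ((1 : ℝ) / 2))| - Real.log α₃)) +
            ρ ^ (α₁ / (2 * α₂)) := by
  -- extract δ from the limit hypothesis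
  have hev : ∀ᶠ t in nhdsWithin 0 (Ioi 0), υ t < 1/2 :=
    hlim.eventually (gt_mem_nhds (by norm_num : (0:ℝ) < 1/2))
  rw [eventually_nhdsWithin_iff, Metric.eventually_nhds_iff] at hev
  obtain ⟨δ, hδpos, hδ⟩ := hev
  obtain ⟨β, hβdef⟩ : ∃ β : ℝ, β = α₁ / (2 * α₂) := ⟨_, rfl⟩
  have hβpos : 0 < β := by rw [hβdef]; positivity
  obtain ⟨T, hTdef⟩ : ∃ T : ℝ,
      T = 1 + 2 * (α₄ / δ + |Real.log α₃|) / α₁ + Real.log 2 / β := ⟨_, rfl⟩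
  have hlog2 : (0:ℝ) ≤ Real.log 2 := Real.log_nonneg one_le_two
  have hB0 : 0 ≤ Real.log 2 / β := by positivity
  have hA0 : 0 ≤ 2 * (α₄ / δ + |Real.log α₃|) / α₁ := by positivity
  have hTpos : 0 < T := by rw [hTdef]; linarith
  refine ⟨Real.exp (-T), Real.exp_pos _, fun ρ hρpos hρle => ?_⟩
  have hlogρ : Real.log ρ ≤ -T := by
    have h := Real.log_le_log hρpos hρle
    rwa [Real.log_exp] at h
  have hlogρneg : Real.log ρ < 0 := lt_of_le_of_lt hlogρ (by linarith)
  obtain ⟨L, hLdef⟩ : ∃ L : ℝ, L = -Real.log ρ := ⟨_, rfl⟩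
  have habsL : |Real.log ρ| = L := by rw [hLdef]; exact abs_of_neg hlogρneg
  have hTL : T ≤ L := by rw [hLdef]; linarith
  have hLpos : 0 < L := lt_of_lt_of_le hTpos hTL
  obtain ⟨D, hDdef⟩ : ∃ D : ℝ, D = α₁ * (L / 2) - Real.log α₃ := ⟨_, rfl⟩
  have habsα₃ : Real.log α₃ ≤ |Real.log α₃| := le_abs_self _
  have hαδ : 0 < α₄ / δ := by positivity
  have hD : α₁ / 2 + α₄ / δ ≤ D := by
    have hTe : α₁ * T = α₁ + 2 * (α₄ / δ + |Real.log α₃|)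
        + α₁ * (Real.log 2 / β) := by
      rw [hTdef]; field_simp
    have h5 : α₁ * T ≤ α₁ * L := mul_le_mul_of_nonneg_left hTL h₁.le
    have h6 : 0 ≤ α₁ * (Real.log 2 / β) := by positivity
    rw [hDdef]
    linarith
  have hDpos : 0 < D := by linarith
  obtain ⟨d, hddef⟩ : ∃ d : ℝ, d = α₄ / D := ⟨_, rfl⟩
  have hd_pos : 0 < d := by rw [hddef]; positivity
  have hdδ : d < δ := by
    rw [hddef, div_lt_iff₀ hDpos]
    have h9 : δ * (α₁ / 2 + α₄ / δ) ≤ δ * D := mul_le_mul_of_nonneg_left hD hδpos.le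
    have h10 : δ * (α₄ / δ) = α₄ := mul_div_cancel₀ _ (ne_of_gt hδpos)
    nlinarith
  have hυd : υ d < 1/2 := by
    refine hδ ?_ (mem_Ioi.mpr hd_pos)
    rw [Real.dist_eq, sub_zero, abs_of_pos hd_pos]; exact hdδ
  obtain ⟨p, hpdef⟩ : ∃ p : ℝ, p = ρ ^ β := ⟨_, rfl⟩
  have hp_pos : 0 < p := by rw [hpdef]; exact Real.rpow_pos_of_pos hρpos β
  have hp_half : p ≤ 1/2 := by
    have hpe : p = Real.exp (Real.log ρ * β) := by
      rw [hpdef]; exact Real.rpow_def_of_pos hρpos β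
    have hTβ : Real.log 2 ≤ T * β := by
      have h11 : Real.log 2 / β * β = Real.log 2 := div_mul_cancel₀ _ (ne_of_gt hβpos)
      have h12 : 0 ≤ (1 + 2 * (α₄ / δ + |Real.log α₃|) / α₁) * β := by positivity
      have h13 : T * β = (1 + 2 * (α₄ / δ + |Real.log α₃|) / α₁) * β
          + Real.log 2 / β * β := by rw [hTdef]; ring
      linarith
    have h13 : Real.log ρ * β ≤ -T * β :=
      mul_le_mul_of_nonneg_right hlogρ hβpos.le
    have h14 : Real.log ρ * β ≤ -Real.log 2 := by nlinarith
    rw [hpe]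
    calc Real.exp (Real.log ρ * β) ≤ Real.exp (-Real.log 2) :=
          Real.exp_le_exp.mpr h14
      _ = 1/2 := by
          rw [Real.exp_neg, Real.exp_log (by norm_num : (0:ℝ) < 2)]; norm_num
  have hυd0 : 0 ≤ υ d := hnonneg d hd_pos
  obtain ⟨x, hxdef⟩ : ∃ x : ℝ, x = υ d + p := ⟨_, rfl⟩
  have hx0 : 0 < x := by rw [hxdef]; linarith
  have hx1 : x ≤ 1 := by rw [hxdef]; linarith
  -- USC step: find z > d with υ z < x
  have husc' : ∀ᶠ z in nhdsWithin d (Ioi 0), υ z < x :=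
    husc d (mem_Ioi.mpr hd_pos) x (by rw [hxdef]; linarith)
  have h2 : ∀ᶠ z in nhdsWithin d (Ioi d), υ z < x :=
    husc'.filter_mono (nhdsWithin_mono d (Ioi_subset_Ioi hd_pos.le))
  obtain ⟨z, hz_lt, hz_mem⟩ := (h2.and eventually_mem_nhdsWithin).exists
  have hz0 : 0 < z := lt_trans hd_pos hz_mem
  have hRinv : (R x)⁻¹ = sSup {w : ℝ | 0 < w ∧ υ w ≤ x} := hR1 x hx0 hx1
  have hzle : z ≤ (R x)⁻¹ := by
    rw [hRinv]; exact le_csSup (hbdd x hx0) ⟨hz0, hz_lt.le⟩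
  have hd_lt_inv : d < (R x)⁻¹ := lt_of_lt_of_le hz_mem hzle
  have hRx : 0 < R x := hRpos x hx0
  have key : R x * α₄ < D := by
    have h3 : R x * d < 1 := by
      have h := mul_lt_mul_of_pos_left hd_lt_inv hRx
      rwa [mul_inv_cancel₀ (ne_of_gt hRx)] at h
    rw [hddef, ← mul_div_assoc, div_lt_one hDpos] at h3
    exact h3
  have hhalf : |Real.log (ρ ^ ((1:ℝ)/2))| = L / 2 := by
    rw [Real.log_rpow hρpos, abs_mul, abs_of_nonneg (by norm_num : (0:ℝ) ≤ 1/2),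
      habsL]
    ring
  have hA : R x * α₄ / α₁ < L / 2 - Real.log α₃ / α₁ := by
    rw [div_lt_iff₀ h₁]
    have hexp : (L / 2 - Real.log α₃ / α₁) * α₁ = α₁ * (L / 2) - Real.log α₃ := by
      field_simp
    rw [hexp, ← hDdef]
    exact key
  have hlogx : β * Real.log ρ ≤ Real.log x := by
    have h15 : Real.log p ≤ Real.log x :=
      Real.log_le_log hp_pos (by rw [hxdef]; linarith)
    rwa [hpdef, Real.log_rpow hρpos] at h15
  have hB : -(L/2) ≤ (α₂ / α₁) * Real.log x := by
    have h16 : (α₂ / α₁) * (β * Real.log ρ) ≤ (α₂ / α₁) * Real.log x :=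
      mul_le_mul_of_nonneg_left hlogx (by positivity)
    have h17 : (α₂ / α₁) * (β * Real.log ρ) = -(L/2) := by
      rw [hβdef, hLdef]
      field_simp
    linarith
  have hmemS : x ∈ {x : ℝ | 0 < x ∧
      R x / (α₁ / α₄) - (α₂ / α₁) * Real.log x + Real.log α₃ / α₁
        < |Real.log ρ|} := by
    refine ⟨hx0, ?_⟩
    have e1 : R x / (α₁ / α₄) = R x * α₄ / α₁ := by
      field_simp
    rw [habsL, e1]
    linarith
  have hbb : BddBelow {x : ℝ | 0 < x ∧
      R x / (α₁ / α₄) - (α₂ / α₁) * Real.log x + Real.log α₃ / α₁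
        < |Real.log ρ|} := ⟨0, fun y hy => le_of_lt hy.1⟩
  have hfin := csInf_le hbb hmemS
  have hxeq : x = υ (α₄ / (α₁ * |Real.log (ρ ^ ((1:ℝ)/2))| - Real.log α₃)) +
      ρ ^ (α₁ / (2 * α₂)) := by
    rw [hhalf, ← hDdef, ← hddef, ← hβdef, ← hpdef, hxdef]
  linarith [hfin]
end
end
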